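/- For every y ∈ ℝⁿ and t > 0, the L¹ modulus of continuity of the Poisson kernel satisfies ∫_{ℝⁿ} |P_t(x) − P_t(x+y)| dx ≤ √n ‖y‖₂ / t. -/

import Mathlib

open Real MeasureTheory

/-- The `n`-dimensional Poisson kernel `P_t(x) = c_n t / (t² + ‖x‖₂²)^((n+1)/2)`,
where `c_n = Γ((n+1)/2)/π^((n+1)/2)`. -/
noncomputable def euclideanPoissonKernel (n : ℕ) (t : ℝ) (x : EuclideanSpace ℝ (Fin n)) : ℝ :=
  (Real.Gamma (((n : ℝ) + 1) / 2) / Real.pi ^ (((n : ℝ) + 1) / 2)) * t /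
    (t ^ 2 + ‖x‖ ^ 2) ^ (((n : ℝ) + 1) / 2)

section aux
open Real Set Filter MeasureTheory Topology Metric RealInnerProductSpace

noncomputable def pC (n : ℕ) : ℝ := Real.Gamma (((n:ℝ)+1)/2) / Real.pi ^ (((n:ℝ)+1)/2)

lemma pC_pos (n : ℕ) : 0 < pC n :=
  div_pos (Real.Gamma_pos_of_pos (by positivity)) (Real.rpow_pos_of_pos Real.pi_pos _)

noncomputable def pg (n : ℕ) (t : ℝ) (x : EuclideanSpace ℝ (Fin n)) : ℝ :=
  pC n * t * ((n:ℝ)+1) * (‖x‖ * (t^2+‖x‖^2) ^ (-(((n:ℝ)+3)/2)))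


lemma radial_aux (n : ℕ) (t : ℝ) (ht : 0 < t) :
    (∀ r : ℝ, HasDerivAt (fun r : ℝ => (1/(((n:ℝ)+1)*t^2)) * (r^(n+1) * (t^2+r^2) ^ (-(((n:ℝ)+1)/2))))
      (r ^ n * (t^2 + r^2) ^ (-(((n:ℝ)+3)/2))) r) := by
  intro r
  set p : ℝ := ((n:ℝ)+1)/2 with hp
  have hA : (0:ℝ) < t^2 + r^2 := by positivity
  have h1 : HasDerivAt (fun r : ℝ => r^(n+1)) (((n:ℝ)+1) * r ^ n) r := by
    have := hasDerivAt_pow (n+1) r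
    simpa [Nat.cast_add] using this
  have h2 : HasDerivAt (fun r : ℝ => (t^2+r^2) ^ (-p)) (2*r * (-p) * (t^2+r^2) ^ (-p-1)) r := by
    have hbase : HasDerivAt (fun r : ℝ => t^2+r^2) (2*r) r := by
      have := (hasDerivAt_pow 2 r).const_add (t^2)
      simpa [two_mul, mul_comm] using this
    have := hbase.rpow_const (p := -p) (Or.inl hA.ne')
    exact this
  have hmul := h1.mul h2
  have := hmul.const_mul (1/(((n:ℝ)+1)*t^2))
  refine this.congr_deriv ?_
  have hA1 : (t^2+r^2) ^ (-p) = (t^2+r^2) ^ (-p-1) * (t^2+r^2) := by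
    rw [← Real.rpow_add_one hA.ne' (-p-1)]
    norm_num
  have hexp : -p - 1 = -(((n:ℝ)+3)/2) := by rw [hp]; ring
  rw [← hexp, hA1]
  have hn1 : ((n:ℝ)+1) ≠ 0 := by positivity
  field_simp
  ring_nf
  rw [hp]; ring

lemma radial_tendsto (n : ℕ) (t : ℝ) (ht : 0 < t) :
    Tendsto (fun r : ℝ => (1/(((n:ℝ)+1)*t^2)) * (r^(n+1) * (t^2+r^2) ^ (-(((n:ℝ)+1)/2))))
      atTop (𝓝 (1/(((n:ℝ)+1)*t^2))) := by
  set p : ℝ := ((n:ℝ)+1)/2 with hp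
  have h0 : Tendsto (fun r : ℝ => t^2/(t^2+r^2)) atTop (𝓝 0) := by
    apply Tendsto.div_atTop (tendsto_const_nhds)
    apply tendsto_atTop_add_const_left
    exact tendsto_pow_atTop (by norm_num) |>.comp tendsto_id |>.congr (fun x => rfl)
  have h1 : Tendsto (fun r : ℝ => 1 - t^2/(t^2+r^2)) atTop (𝓝 1) := by
    simpa using (tendsto_const_nhds (x := (1:ℝ)) (f := atTop)).sub h0
  have h2 : Tendsto (fun r : ℝ => (1 - t^2/(t^2+r^2)) ^ p) atTop (𝓝 1) := by
    have hc : ContinuousAt (fun x : ℝ => x ^ p) 1 :=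
      Real.continuousAt_rpow_const 1 p (Or.inl one_ne_zero)
    have := hc.tendsto.comp h1
    simpa [Function.comp_def] using this
  have heq : ∀ᶠ r in (atTop : Filter ℝ), (1 - t^2/(t^2+r^2)) ^ p
      = r^(n+1) * (t^2+r^2) ^ (-p) := by
    filter_upwards [eventually_gt_atTop (0:ℝ)] with r hr
    have hA : (0:ℝ) < t^2 + r^2 := by positivity
    have hsub : 1 - t^2/(t^2+r^2) = r^2/(t^2+r^2) := by field_simp; ring
    rw [hsub, Real.div_rpow (by positivity) hA.le, Real.rpow_neg hA.le, div_eq_mul_inv]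
    congr 1
    have h3 : (r^2) ^ p = r ^ (((n:ℝ)+1)) := by
      rw [← Real.rpow_natCast r 2, ← Real.rpow_mul hr.le]
      congr 1
      rw [hp]; push_cast; ring
    rw [h3, ← Real.rpow_natCast r (n+1)]
    norm_cast
  have := (h2.congr' heq).const_mul (1/(((n:ℝ)+1)*t^2))
  simpa using this

lemma radial_value (n : ℕ) (t : ℝ) (ht : 0 < t) :
    ∫ r in Set.Ioi (0:ℝ), r ^ n * (t^2 + r^2) ^ (-(((n:ℝ)+3)/2)) = 1/(((n:ℝ)+1)*t^2) := by
  rw [integral_Ioi_of_hasDerivAt_of_nonneg' (fun r _ => radial_aux n t ht r)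
    (fun r hr => mul_nonneg (pow_nonneg (le_of_lt hr) _) (Real.rpow_nonneg (by positivity) _))
    (radial_tendsto n t ht)]
  simp [zero_pow (Nat.succ_ne_zero n)]

lemma radial_integrableOn (n : ℕ) (t : ℝ) (ht : 0 < t) :
    IntegrableOn (fun r : ℝ => r ^ n * (t^2 + r^2) ^ (-(((n:ℝ)+3)/2))) (Set.Ioi 0) :=
  integrableOn_Ioi_deriv_of_nonneg' (fun r _ => radial_aux n t ht r)
    (fun r hr => mul_nonneg (pow_nonneg (le_of_lt hr) _) (Real.rpow_nonneg (by positivity) _))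
    (radial_tendsto n t ht)

lemma gamma_half_le (n : ℕ) (hn : 1 ≤ n) :
    2 * Real.Gamma (((n:ℝ)+1)/2) ≤ Real.sqrt Real.pi * Real.sqrt (n:ℝ) * Real.Gamma ((n:ℝ)/2) := by
  have hn0 : (0:ℝ) < (n:ℝ)/2 := by positivity
  have hga : 0 < Real.Gamma ((n:ℝ)/2) := Real.Gamma_pos_of_pos hn0
  have hgb : 0 < Real.Gamma ((n:ℝ)/2 + 1) := Real.Gamma_pos_of_pos (by linarith)
  have hconv := Real.convexOn_log_Gamma.2 (Set.mem_Ioi.2 hn0) (Set.mem_Ioi.2 (show (0:ℝ) < (n:ℝ)/2+1 by linarith))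
    (by norm_num : (0:ℝ) ≤ (1/2:ℝ)) (by norm_num : (0:ℝ) ≤ (1/2:ℝ)) (by norm_num)
  have hmid : (1/2:ℝ) • ((n:ℝ)/2) + (1/2:ℝ) • ((n:ℝ)/2+1) = ((n:ℝ)+1)/2 := by
    simp only [smul_eq_mul]; ring
  rw [hmid] at hconv
  simp only [Function.comp_apply, smul_eq_mul] at hconv
  -- Γ((n+1)/2) ≤ sqrt (Γ(n/2) * Γ(n/2+1))
  have hg : Real.Gamma (((n:ℝ)+1)/2) ≤ Real.sqrt (Real.Gamma ((n:ℝ)/2) * Real.Gamma ((n:ℝ)/2+1)) := by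
    have h1 : Real.log (Real.Gamma (((n:ℝ)+1)/2)) ≤
        Real.log (Real.sqrt (Real.Gamma ((n:ℝ)/2) * Real.Gamma ((n:ℝ)/2+1))) := by
      rw [Real.log_sqrt (by positivity), Real.log_mul hga.ne' hgb.ne']
      linarith
    have hgc : 0 < Real.Gamma (((n:ℝ)+1)/2) := Real.Gamma_pos_of_pos (by positivity)
    exact (Real.log_le_log_iff hgc (Real.sqrt_pos.2 (by positivity))).1 h1
  have hadd : Real.Gamma ((n:ℝ)/2 + 1) = ((n:ℝ)/2) * Real.Gamma ((n:ℝ)/2) := Real.Gamma_add_one hn0.ne'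
  rw [hadd] at hg
  have hsq : Real.sqrt (Real.Gamma ((n:ℝ)/2) * ((n:ℝ)/2 * Real.Gamma ((n:ℝ)/2)))
      = Real.Gamma ((n:ℝ)/2) * Real.sqrt ((n:ℝ)/2) := by
    rw [show Real.Gamma ((n:ℝ)/2) * ((n:ℝ)/2 * Real.Gamma ((n:ℝ)/2)) = (Real.Gamma ((n:ℝ)/2))^2 * ((n:ℝ)/2) by ring,
      Real.sqrt_mul (sq_nonneg _), Real.sqrt_sq hga.le]
  rw [hsq] at hg
  -- now 2 * Γ(n/2) * sqrt(n/2) ≤ sqrt π * sqrt n * Γ(n/2)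
  have key : 2 * Real.sqrt ((n:ℝ)/2) ≤ Real.sqrt Real.pi * Real.sqrt (n:ℝ) := by
    rw [← Real.sqrt_mul Real.pi_pos.le]
    have h2 : 2 * Real.sqrt ((n:ℝ)/2) = Real.sqrt (4 * ((n:ℝ)/2)) := by
      rw [Real.sqrt_mul (by norm_num : (0:ℝ) ≤ 4), show Real.sqrt 4 = 2 by
        rw [show (4:ℝ) = 2^2 by norm_num, Real.sqrt_sq (by norm_num : (0:ℝ) ≤ 2)]]
    rw [h2]
    apply Real.sqrt_le_sqrt
    have : (2:ℝ) ≤ Real.pi := by linarith [Real.pi_gt_three]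
    have hn1 : (1:ℝ) ≤ (n:ℝ) := by exact_mod_cast hn
    nlinarith
  calc 2 * Real.Gamma (((n:ℝ)+1)/2) ≤ 2 * (Real.Gamma ((n:ℝ)/2) * Real.sqrt ((n:ℝ)/2)) := by linarith
    _ = (2 * Real.sqrt ((n:ℝ)/2)) * Real.Gamma ((n:ℝ)/2) := by ring
    _ ≤ (Real.sqrt Real.pi * Real.sqrt (n:ℝ)) * Real.Gamma ((n:ℝ)/2) := by
        apply mul_le_mul_of_nonneg_right key hga.le


lemma pg_nonneg (n : ℕ) (t : ℝ) (ht : 0 < t) (x : EuclideanSpace ℝ (Fin n)) : 0 ≤ pg n t x := by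
  have := pC_pos n
  unfold pg
  positivity

lemma pg_continuous (n : ℕ) (t : ℝ) (ht : 0 < t) : Continuous (pg n t) := by
  unfold pg
  apply Continuous.mul continuous_const
  apply Continuous.mul continuous_norm
  apply Continuous.rpow_const
  · fun_prop
  · intro x
    left
    positivity

lemma pg_integrable (n : ℕ) (t : ℝ) (ht : 0 < t) : Integrable (pg n t) := by
  set m : ℝ := min (t^2) 1 with hm
  have hmpos : 0 < m := lt_min (by positivity) one_pos
  have hint : Integrable (fun x : EuclideanSpace ℝ (Fin n) =>
      (pC n * t * ((n:ℝ)+1) * m ^ (-(((n:ℝ)+2))/2)) * ((1:ℝ) + ‖x‖^2) ^ (-(((n:ℝ)+2))/2)) := by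
    apply Integrable.const_mul
    apply integrable_rpow_neg_one_add_norm_sq
    rw [finrank_euclideanSpace_fin]
    linarith
  refine hint.mono' ((pg_continuous n t ht).aestronglyMeasurable) (Filter.Eventually.of_forall fun x => ?_)
  have hA : (0:ℝ) < t^2 + ‖x‖^2 := by positivity
  rw [Real.norm_of_nonneg (pg_nonneg n t ht x)]
  unfold pg
  have hc : 0 ≤ pC n * t * ((n:ℝ)+1) := by
    have := pC_pos n; positivity
  rw [mul_assoc (pC n * t * ((n:ℝ)+1))]
  apply mul_le_mul_of_nonneg_left _ hc
  -- ‖x‖ * (t²+‖x‖²)^(-(n+3)/2) ≤ m^(-(n+2)/2) * (1+‖x‖²)^(-(n+2)/2)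
  have h1 : ‖x‖ ≤ (t^2+‖x‖^2) ^ ((1:ℝ)/2) := by
    have h2 : (‖x‖^2 : ℝ) ^ ((1:ℝ)/2) ≤ (t^2+‖x‖^2) ^ ((1:ℝ)/2) :=
      Real.rpow_le_rpow (by positivity) (by nlinarith) (by norm_num)
    calc ‖x‖ = ((‖x‖^2 : ℝ)) ^ ((1:ℝ)/2) := by
          rw [← Real.rpow_natCast ‖x‖ 2, ← Real.rpow_mul (norm_nonneg x)]
          norm_num
      _ ≤ _ := h2
  calc ‖x‖ * (t^2+‖x‖^2) ^ (-(((n:ℝ)+3)/2))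
      ≤ (t^2+‖x‖^2) ^ ((1:ℝ)/2) * (t^2+‖x‖^2) ^ (-(((n:ℝ)+3)/2)) := by
        apply mul_le_mul_of_nonneg_right h1 (Real.rpow_nonneg hA.le _)
    _ = (t^2+‖x‖^2) ^ (-(((n:ℝ)+2))/2) := by
        rw [← Real.rpow_add hA]; norm_num; ring_nf
    _ ≤ (m * ((1:ℝ) + ‖x‖^2)) ^ (-(((n:ℝ)+2))/2) := by
        apply Real.rpow_le_rpow_of_nonpos (by positivity) _ (by
          have : (0:ℝ) ≤ (n:ℝ) := Nat.cast_nonneg n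
          linarith)
        have h3 : m ≤ t^2 := min_le_left _ _
        have h4 : m ≤ 1 := min_le_right _ _
        nlinarith [sq_nonneg ‖x‖, hmpos]
    _ = m ^ (-(((n:ℝ)+2))/2) * ((1:ℝ) + ‖x‖^2) ^ (-(((n:ℝ)+2))/2) :=
        Real.mul_rpow hmpos.le (by positivity)

lemma pi_rpow_succ_half (n : ℕ) :
    Real.pi ^ (((n:ℝ)+1)/2) = (Real.sqrt Real.pi)^n * Real.sqrt Real.pi := by
  rw [Real.sqrt_eq_rpow, ← Real.rpow_natCast (Real.pi ^ ((1:ℝ)/2)) n,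
    ← Real.rpow_mul Real.pi_pos.le, ← Real.rpow_add Real.pi_pos]
  congr 1
  push_cast; ring

lemma pg_arith (n : ℕ) (hn : 1 ≤ n) (t : ℝ) (ht : 0 < t) :
    (n:ℝ) * ((Real.sqrt Real.pi ^ n)/Real.Gamma ((n:ℝ)/2+1)) *
      (pC n * t * ((n:ℝ)+1) * (1/(((n:ℝ)+1)*t^2)))
    = (2 * Real.Gamma (((n:ℝ)+1)/2) / (Real.sqrt Real.pi * Real.Gamma ((n:ℝ)/2))) / t := by
  have hn1 : (1:ℝ) ≤ (n:ℝ) := by exact_mod_cast hn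
  have hg2 : Real.Gamma ((n:ℝ)/2+1) = ((n:ℝ)/2) * Real.Gamma ((n:ℝ)/2) :=
    Real.Gamma_add_one (by positivity)
  have hga : 0 < Real.Gamma ((n:ℝ)/2) := Real.Gamma_pos_of_pos (by positivity)
  have hsp : 0 < Real.sqrt Real.pi := Real.sqrt_pos.2 Real.pi_pos
  have hspn : (0:ℝ) < Real.sqrt Real.pi ^ n := by positivity
  unfold pC
  rw [pi_rpow_succ_half, hg2]
  field_simp

lemma pg_integral (n : ℕ) (hn : 1 ≤ n) (t : ℝ) (ht : 0 < t) :
    ∫ x : EuclideanSpace ℝ (Fin n), pg n t x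
      = (2 * Real.Gamma (((n:ℝ)+1)/2) / (Real.sqrt Real.pi * Real.Gamma ((n:ℝ)/2))) / t := by
  haveI : Nonempty (Fin n) := ⟨⟨0, hn⟩⟩
  haveI : Nontrivial (EuclideanSpace ℝ (Fin n)) :=
    ⟨0, EuclideanSpace.single ⟨0, hn⟩ (1:ℝ), by
      intro h
      have := congrArg (fun v : EuclideanSpace ℝ (Fin n) => v ⟨0, hn⟩) h.symm
      simp [EuclideanSpace.single] at this⟩
  have key := MeasureTheory.integral_fun_norm_addHaar (volume : Measure (EuclideanSpace ℝ (Fin n)))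
    (fun r : ℝ => pC n * t * ((n:ℝ)+1) * (r * (t^2+r^2) ^ (-(((n:ℝ)+3)/2))))
  have hdim : Module.finrank ℝ (EuclideanSpace ℝ (Fin n)) = n := finrank_euclideanSpace_fin
  rw [hdim] at key
  have hpg : (∫ x : EuclideanSpace ℝ (Fin n), pg n t x)
      = ∫ x : EuclideanSpace ℝ (Fin n),
        (fun r : ℝ => pC n * t * ((n:ℝ)+1) * (r * (t^2+r^2) ^ (-(((n:ℝ)+3)/2)))) ‖x‖ := rfl
  rw [hpg, key]
  -- inner radial integral
  have hinner : (∫ r in Set.Ioi (0:ℝ), r ^ (n-1) •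
        (pC n * t * ((n:ℝ)+1) * (r * (t^2+r^2) ^ (-(((n:ℝ)+3)/2)))))
      = pC n * t * ((n:ℝ)+1) * (1/(((n:ℝ)+1)*t^2)) := by
    have hcongr : ∀ r : ℝ, r ^ (n-1) •
        (pC n * t * ((n:ℝ)+1) * (r * (t^2+r^2) ^ (-(((n:ℝ)+3)/2))))
        = (pC n * t * ((n:ℝ)+1)) * (r ^ n * (t^2+r^2) ^ (-(((n:ℝ)+3)/2))) := by
      intro r
      have hpow : r ^ (n-1) * r = r ^ n := by
        rw [← pow_succ, Nat.sub_add_cancel hn]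
      rw [smul_eq_mul, ← hpow]; ring
    simp_rw [hcongr]
    rw [MeasureTheory.integral_const_mul, radial_value n t ht]
  rw [hinner]
  -- ball volume
  have hball : (volume.real (Metric.ball (0 : EuclideanSpace ℝ (Fin n)) 1) : ℝ)
      = Real.sqrt Real.pi ^ n / Real.Gamma ((n:ℝ)/2+1) := by
    rw [measureReal_def, EuclideanSpace.volume_ball]
    simp only [Fintype.card_fin, ENNReal.ofReal_one, one_pow, one_mul]
    have hgp := Real.Gamma_pos_of_pos (show (0:ℝ) < (n:ℝ)/2+1 by positivity)
    rw [ENNReal.toReal_ofReal (by positivity)]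
  rw [hball, nsmul_eq_mul, smul_eq_mul]
  rw [← mul_assoc]
  exact pg_arith n hn t ht

lemma pg_integral_le (n : ℕ) (hn : 1 ≤ n) (t : ℝ) (ht : 0 < t) :
    ∫ x : EuclideanSpace ℝ (Fin n), pg n t x ≤ Real.sqrt (n:ℝ) / t := by
  rw [pg_integral n hn t ht]
  gcongr
  have hga : 0 < Real.Gamma ((n:ℝ)/2) := Real.Gamma_pos_of_pos (by positivity)
  have hsp : 0 < Real.sqrt Real.pi := Real.sqrt_pos.2 Real.pi_pos
  rw [div_le_iff₀ (by positivity)]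
  have := gamma_half_le n hn
  nlinarith
lemma poissonKernel_eq (n : ℕ) (t : ℝ) (ht : 0 < t) (x : EuclideanSpace ℝ (Fin n)) :
    euclideanPoissonKernel n t x = pC n * t * (t^2+‖x‖^2) ^ (-(((n:ℝ)+1)/2)) := by
  unfold euclideanPoissonKernel pC
  rw [Real.rpow_neg (by positivity), div_eq_mul_inv]

lemma line_hasDerivAt (n : ℕ) (t : ℝ) (ht : 0 < t) (x y : EuclideanSpace ℝ (Fin n)) (s : ℝ) :
    HasDerivAt (fun s : ℝ => euclideanPoissonKernel n t (x + s • y))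
      (pC n * t * ((2*⟪x,y⟫ + ‖y‖^2*(2*s)) * (-(((n:ℝ)+1)/2)) *
        (t^2+‖x + s • y‖^2) ^ (-(((n:ℝ)+1)/2) - 1))) s := by
  set p : ℝ := ((n:ℝ)+1)/2 with hp
  have hu : ∀ s : ℝ, ‖x + s • y‖^2 = ‖x‖^2 + 2*⟪x,y⟫*s + ‖y‖^2*s^2 := by
    intro s
    rw [norm_add_sq_real, real_inner_smul_right, norm_smul]
    simp [mul_pow, sq_abs]
    ring
  have hfun : (fun s : ℝ => euclideanPoissonKernel n t (x + s • y))
      = (fun s : ℝ => pC n * t * (t^2+(‖x‖^2 + 2*⟪x,y⟫*s + ‖y‖^2*s^2)) ^ (-p)) := by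
    funext s
    rw [poissonKernel_eq n t ht, hu s]
  rw [hfun]
  have hA : (0:ℝ) < t^2 + (‖x‖^2 + 2*⟪x,y⟫*s + ‖y‖^2*s^2) := by
    have := hu s
    nlinarith [sq_nonneg ‖x + s • y‖, sq_nonneg t, ht]
  have h1 : HasDerivAt (fun s : ℝ => t^2+(‖x‖^2 + 2*⟪x,y⟫*s + ‖y‖^2*s^2))
      (2*⟪x,y⟫ + ‖y‖^2*(2*s)) s := by
    have ha : HasDerivAt (fun s : ℝ => 2*⟪x,y⟫*s) (2*⟪x,y⟫) s := by
      simpa using (hasDerivAt_id s).const_mul (2*⟪x,y⟫)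
    have hb : HasDerivAt (fun s : ℝ => ‖y‖^2*s^2) (‖y‖^2*(2*s)) s := by
      have := (hasDerivAt_pow 2 s).const_mul (‖y‖^2)
      simpa using this
    have h1' := ((ha.add hb).const_add (‖x‖^2)).const_add (t^2)
    simpa [← add_assoc] using h1'
  have h2 := (h1.rpow_const (p := -p) (Or.inl hA.ne')).const_mul (pC n * t)
  refine h2.congr_deriv ?_
  rw [hu s]

lemma line_deriv_abs_le (n : ℕ) (t : ℝ) (ht : 0 < t) (x y : EuclideanSpace ℝ (Fin n)) (s : ℝ) :
    |pC n * t * ((2*⟪x,y⟫ + ‖y‖^2*(2*s)) * (-(((n:ℝ)+1)/2)) *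
        (t^2+‖x + s • y‖^2) ^ (-(((n:ℝ)+1)/2) - 1))|
      ≤ pg n t (x + s • y) * ‖y‖ := by
  set p : ℝ := ((n:ℝ)+1)/2 with hp
  set z := x + s • y with hz
  have hinner : 2*⟪x,y⟫ + ‖y‖^2*(2*s) = 2*⟪z,y⟫ := by
    rw [hz, inner_add_left, real_inner_smul_left, real_inner_self_eq_norm_sq]
    ring
  have hA : (0:ℝ) < t^2 + ‖z‖^2 := by positivity
  have hApos : (0:ℝ) ≤ (t^2+‖z‖^2) ^ (-p-1) := Real.rpow_nonneg hA.le _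
  have hC : (0:ℝ) < pC n * t := mul_pos (pC_pos n) ht
  have hppos : (0:ℝ) ≤ p := by rw [hp]; positivity
  have habs : |pC n * t * ((2*⟪z,y⟫) * (-p) * ((t^2+‖z‖^2) ^ (-p-1)))|
      = pC n * t * (|2*⟪z,y⟫| * p * ((t^2+‖z‖^2) ^ (-p-1))) := by
    rw [abs_mul, abs_mul, abs_mul, abs_mul, abs_neg,
      abs_of_pos (pC_pos n), abs_of_pos ht, abs_of_nonneg hApos, abs_of_nonneg hppos]
  rw [hinner, habs]
  have hIn : |2*⟪z,y⟫| ≤ 2 * (‖z‖ * ‖y‖) := by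
    rw [abs_mul, abs_of_nonneg (by norm_num : (0:ℝ) ≤ 2)]
    exact mul_le_mul_of_nonneg_left (abs_real_inner_le_norm z y) (by norm_num)
  have hexp : -p - 1 = -(((n:ℝ)+3)/2) := by rw [hp]; ring
  unfold pg
  rw [← hexp]
  calc pC n * t * (|2*⟪z,y⟫| * p * (t^2+‖z‖^2) ^ (-p-1))
      ≤ pC n * t * ((2 * (‖z‖ * ‖y‖)) * p * (t^2+‖z‖^2) ^ (-p-1)) := by
        apply mul_le_mul_of_nonneg_left _ hC.le
        apply mul_le_mul_of_nonneg_right _ hApos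
        exact mul_le_mul_of_nonneg_right hIn (by positivity)
    _ = pC n * t * ((n:ℝ)+1) * (‖z‖ * (t^2+‖z‖^2) ^ (-p-1)) * ‖y‖ := by
        rw [hp]; ring

lemma poissonKernel_continuous (n : ℕ) (t : ℝ) (ht : 0 < t) :
    Continuous (euclideanPoissonKernel n t) := by
  unfold euclideanPoissonKernel
  apply Continuous.div continuous_const
  · apply Continuous.rpow_const
    · fun_prop
    · intro x; left; positivity
  · intro x
    exact ne_of_gt (Real.rpow_pos_of_pos (by positivity) _)

lemma pointwise_bound (n : ℕ) (t : ℝ) (ht : 0 < t) (x y : EuclideanSpace ℝ (Fin n)) :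
    |euclideanPoissonKernel n t x - euclideanPoissonKernel n t (x + y)|
      ≤ ∫ s in Set.Ioc (0:ℝ) 1, pg n t (x + s • y) * ‖y‖ := by
  set D : ℝ → ℝ := fun s => pC n * t * ((2*⟪x,y⟫ + ‖y‖^2*(2*s)) * (-(((n:ℝ)+1)/2)) *
        (t^2+‖x + s • y‖^2) ^ (-(((n:ℝ)+1)/2) - 1)) with hD
  have hline : Continuous (fun s : ℝ => x + s • y) :=
    continuous_const.add (continuous_id.smul continuous_const)
  have hA : ∀ s : ℝ, (0:ℝ) < t^2 + ‖x + s • y‖^2 := fun s => by positivity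
  have hDcont : Continuous D := by
    rw [hD]
    apply Continuous.mul continuous_const
    apply Continuous.mul
    · fun_prop
    · apply Continuous.rpow_const
      · fun_prop
      · exact fun s => Or.inl (hA s).ne'
  have hgcont : Continuous (fun s : ℝ => pg n t (x + s • y) * ‖y‖) :=
    ((pg_continuous n t ht).comp hline).mul continuous_const
  have hftc : (∫ s in (0:ℝ)..1, D s)
      = euclideanPoissonKernel n t (x + (1:ℝ) • y) - euclideanPoissonKernel n t (x + (0:ℝ) • y) :=
    intervalIntegral.integral_eq_sub_of_hasDerivAt
      (fun s _ => line_hasDerivAt n t ht x y s) (hDcont.intervalIntegrable 0 1)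
  rw [one_smul, zero_smul, add_zero] at hftc
  have h1 : |euclideanPoissonKernel n t x - euclideanPoissonKernel n t (x + y)| = |∫ s in (0:ℝ)..1, D s| := by
    rw [hftc, abs_sub_comm]
  rw [h1]
  have h2 : |∫ s in (0:ℝ)..1, D s| ≤ ∫ s in (0:ℝ)..1, |D s| :=
    intervalIntegral.abs_integral_le_integral_abs zero_le_one
  have h3 : (∫ s in (0:ℝ)..1, |D s|) ≤ ∫ s in (0:ℝ)..1, pg n t (x + s • y) * ‖y‖ := by
    apply intervalIntegral.integral_mono_on zero_le_one
      (hDcont.abs.intervalIntegrable 0 1) (hgcont.intervalIntegrable 0 1)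
    intro s _
    exact line_deriv_abs_le n t ht x y s
  have h4 : (∫ s in (0:ℝ)..1, pg n t (x + s • y) * ‖y‖)
      = ∫ s in Set.Ioc (0:ℝ) 1, pg n t (x + s • y) * ‖y‖ :=
    intervalIntegral.integral_of_le zero_le_one
  linarith

end aux

/-- L¹ modulus of continuity of the Poisson kernel:
`∫_{ℝⁿ} |P_t(x) − P_t(x+y)| dx ≤ √n ‖y‖₂ / t`. -/
theorem poissonKernel_L1_modulus (n : ℕ) (hn : 1 ≤ n) (t : ℝ) (ht : 0 < t)
    (y : EuclideanSpace ℝ (Fin n)) :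
    (∫ x, |euclideanPoissonKernel n t x - euclideanPoissonKernel n t (x + y)|) ≤ Real.sqrt n * ‖y‖ / t := by
  classical
  set ν : Measure ℝ := volume.restrict (Set.Ioc (0:ℝ) 1) with hν
  set f : EuclideanSpace ℝ (Fin n) → ℝ → ℝ := fun x s => pg n t (x + s • y) * ‖y‖ with hf
  have hFcont : Continuous (Function.uncurry f) := by
    apply Continuous.mul _ continuous_const
    exact (pg_continuous n t ht).comp (continuous_fst.add (continuous_snd.smul continuous_const))
  have hslice : ∀ s : ℝ, Integrable (fun x : EuclideanSpace ℝ (Fin n) => f x s) volume :=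
    fun s => ((pg_integrable n t ht).comp_add_right (s • y)).mul_const ‖y‖
  have htrans : ∀ s : ℝ, (∫ x : EuclideanSpace ℝ (Fin n), f x s)
      = (∫ x : EuclideanSpace ℝ (Fin n), pg n t x) * ‖y‖ := by
    intro s
    rw [hf]
    simp only
    rw [MeasureTheory.integral_mul_const]
    congr 1
    exact integral_add_right_eq_self (pg n t) (s • y)
  have hFint : Integrable (Function.uncurry f) ((volume : Measure (EuclideanSpace ℝ (Fin n))).prod ν) := by
    rw [MeasureTheory.integrable_prod_iff' hFcont.aestronglyMeasurable]
    constructor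
    · exact Filter.Eventually.of_forall hslice
    · have hnorm : ∀ s : ℝ, (∫ x : EuclideanSpace ℝ (Fin n), ‖f x s‖)
          = (∫ x : EuclideanSpace ℝ (Fin n), pg n t x) * ‖y‖ := by
        intro s
        rw [← htrans s]
        congr 1
        funext x
        exact Real.norm_of_nonneg (mul_nonneg (pg_nonneg n t ht _) (norm_nonneg y))
      apply MeasureTheory.Integrable.congr
        (g := fun _ : ℝ => ∫ x : EuclideanSpace ℝ (Fin n), ‖f x _‖)
        (f := fun _ : ℝ => (∫ x : EuclideanSpace ℝ (Fin n), pg n t x) * ‖y‖)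
      · exact (integrableOn_const (by simp [Real.volume_Ioc]))
      · exact Filter.Eventually.of_forall (fun s => (hnorm s).symm)
  have hswap := MeasureTheory.integral_integral_swap hFint
  have hHint : Integrable (fun x : EuclideanSpace ℝ (Fin n) => ∫ s, f x s ∂ν) volume :=
    hFint.integral_prod_left
  -- value of ∫ H
  have hH : (∫ x : EuclideanSpace ℝ (Fin n), ∫ s, f x s ∂ν)
      = (∫ x : EuclideanSpace ℝ (Fin n), pg n t x) * ‖y‖ := by
    rw [hswap]
    have : ∀ s : ℝ, (∫ x : EuclideanSpace ℝ (Fin n), f x s)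
        = (∫ x : EuclideanSpace ℝ (Fin n), pg n t x) * ‖y‖ := htrans
    rw [MeasureTheory.integral_congr_ae (Filter.Eventually.of_forall this)]
    rw [MeasureTheory.integral_const]
    rw [hν]
    simp [Real.volume_Ioc]
  -- pointwise bound
  have hpb : ∀ x : EuclideanSpace ℝ (Fin n),
      |euclideanPoissonKernel n t x - euclideanPoissonKernel n t (x + y)| ≤ ∫ s, f x s ∂ν :=
    fun x => pointwise_bound n t ht x y
  have hPc := poissonKernel_continuous n t ht
  have hΔmeas : AEStronglyMeasurable
      (fun x : EuclideanSpace ℝ (Fin n) => |euclideanPoissonKernel n t x - euclideanPoissonKernel n t (x + y)|)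
      volume :=
    ((hPc.sub (hPc.comp (continuous_id.add continuous_const))).abs).aestronglyMeasurable
  have hΔint : Integrable
      (fun x : EuclideanSpace ℝ (Fin n) => |euclideanPoissonKernel n t x - euclideanPoissonKernel n t (x + y)|)
      volume := by
    apply hHint.mono hΔmeas
    apply Filter.Eventually.of_forall
    intro x
    rw [Real.norm_of_nonneg (abs_nonneg _)]
    exact (hpb x).trans (le_abs_self _)
  calc (∫ x, |euclideanPoissonKernel n t x - euclideanPoissonKernel n t (x + y)|)
      ≤ ∫ x : EuclideanSpace ℝ (Fin n), ∫ s, f x s ∂ν :=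
        MeasureTheory.integral_mono hΔint hHint hpb
    _ = (∫ x : EuclideanSpace ℝ (Fin n), pg n t x) * ‖y‖ := hH
    _ ≤ (Real.sqrt n / t) * ‖y‖ :=
        mul_le_mul_of_nonneg_right (pg_integral_le n hn t ht) (norm_nonneg y)
    _ = Real.sqrt n * ‖y‖ / t := by ring
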